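/- Let d ≥ 2 be an integer and let (A_m)_{m≥0} be a formal orbit portrait of valence N ≥ 2 with constant degrees d_m = d for all m. Let ε ∈ (0,1) and m ≥ 0, and suppose every complementary arc of A_{m+1} has length at least ε. Then no complementary arc of A_m has length ℓ satisfying k/d < ℓ < (k + ε)/d for some integer k with 1 ≤ k ≤ d − 1. -/

import Mathlib

/-- The unique representative in `[0,1)` of `b - a`; for `a ≠ b` this is the
unique representative of `b − a` in `(0,1)`, the length `ℓ(a,b)` of the arc from `a` to `b`. -/
noncomputable def arcLen (a b : UnitAddCircle) : ℝ :=
  ((AddCircle.equivIco 1 0) (b - a) : ℝ)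

/-- The open arc `(a,b) = {a + t : 0 < t < ℓ(a,b)}` in `ℝ/ℤ`. -/
def openArc (a b : UnitAddCircle) : Set UnitAddCircle :=
  {x | ∃ t : ℝ, 0 < t ∧ t < arcLen a b ∧ x = a + (t : UnitAddCircle)}

/-- `(a,b,c)` is in positive cyclic order: `ℓ(a,b) < ℓ(a,c)`. -/
def PosCyclic (a b c : UnitAddCircle) : Prop := arcLen a b < arcLen a c

/-- A formal orbit portrait of valence `N` with degrees `d`: a sequence of
`N`-element subsets `A m` of `ℝ/ℤ` such that `θ ↦ d_{m+1}·θ` maps `A m`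
bijectively onto `A (m+1)` and carries every triple of pairwise distinct points
of `A m` in positive cyclic order to a triple in positive cyclic order. -/
def IsFormalPortrait (N : ℕ) (d : ℕ → ℕ) (A : ℕ → Set UnitAddCircle) : Prop :=
  ∀ m : ℕ,
    (A m).Finite ∧ (A m).ncard = N ∧
    Set.BijOn (fun θ => d (m + 1) • θ) (A m) (A (m + 1)) ∧
    ∀ a ∈ A m, ∀ b ∈ A m, ∀ c ∈ A m, a ≠ b → a ≠ c → b ≠ c →
      PosCyclic a b c →
        PosCyclic (d (m + 1) • a) (d (m + 1) • b) (d (m + 1) • c)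

/-- `(a,b)` is a complementary arc of `A`: `a, b ∈ A`, `a ≠ b`, and the open
arc `(a,b)` contains no point of `A`. -/
def IsComplArc (A : Set UnitAddCircle) (a b : UnitAddCircle) : Prop :=
  a ≠ b ∧ a ∈ A ∧ b ∈ A ∧ openArc a b ∩ A = ∅

/-!
If `k/d < ℓ(a,b) < (k+ε)/d`, then `d·b − d·a` is represented by `dℓ(a,b) − k ∈ (0, ε)`. The arc
`(d·a, d·b)` is nevertheless complementary for `A (m+1)`: a point `d·c` of `A (m+1)` inside it
comes from some `c ∈ A m` outside `(a,b)`, so `(a,b,c)` is positively ordered, and then so is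
`(d·a, d·b, d·c)`, which says that `d·c` lies beyond `d·b`. This arc is shorter than `ε`.
-/

lemma coe_arcLen (a b : UnitAddCircle) : ((arcLen a b : ℝ) : UnitAddCircle) = b - a :=
  (AddCircle.equivIco 1 0).symm_apply_apply (b - a)

lemma arcLen_mem_Ico (a b : UnitAddCircle) : arcLen a b ∈ Set.Ico (0 : ℝ) 1 := by
  simpa [arcLen] using ((AddCircle.equivIco 1 0) (b - a)).2

lemma arcLen_nonneg (a b : UnitAddCircle) : 0 ≤ arcLen a b := (arcLen_mem_Ico a b).1

lemma arcLen_lt_one (a b : UnitAddCircle) : arcLen a b < 1 := (arcLen_mem_Ico a b).2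

lemma arcLen_add_coe (a : UnitAddCircle) (x : ℝ) : arcLen a (a + x) = Int.fract x := by
  rw [arcLen, add_sub_cancel_left]
  simp

lemma arcLen_injective (a : UnitAddCircle) : Function.Injective (arcLen a) := fun b c h =>
  sub_left_inj.mp ((coe_arcLen a b).symm.trans (h ▸ coe_arcLen a c))

@[simp]
lemma arcLen_self (a : UnitAddCircle) : arcLen a a = 0 := by
  simpa using arcLen_add_coe a 0

lemma arcLen_pos_iff (a b : UnitAddCircle) : 0 < arcLen a b ↔ a ≠ b := by
  rw [(arcLen_nonneg a b).lt_iff_ne', ne_eq, ← arcLen_self a, (arcLen_injective a).eq_iff,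
    eq_comm]

lemma mem_openArc_iff (a b c : UnitAddCircle) :
    c ∈ openArc a b ↔ 0 < arcLen a c ∧ arcLen a c < arcLen a b := by
  constructor
  · rintro ⟨t, ht0, htb, rfl⟩
    rw [arcLen_add_coe, Int.fract_eq_self.mpr ⟨ht0.le, htb.trans (arcLen_lt_one a b)⟩]
    exact ⟨ht0, htb⟩
  · rintro ⟨hc0, hcb⟩
    exact ⟨arcLen a c, hc0, hcb, by rw [coe_arcLen, add_sub_cancel]⟩

lemma posCyclic_of_notMem_openArc {a b c : UnitAddCircle} (hca : c ≠ a) (hcb : c ≠ b)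
    (hc : c ∉ openArc a b) : PosCyclic a b c := by
  have hac : 0 < arcLen a c := (arcLen_pos_iff a c).mpr hca.symm
  rw [mem_openArc_iff, not_and, not_lt] at hc
  exact (hc hac).lt_of_ne fun h => hcb ((arcLen_injective a h).symm)

lemma arcLen_nsmul (n : ℕ) (a b : UnitAddCircle) :
    arcLen (n • a) (n • b) = Int.fract (n * arcLen a b) := by
  have h : n • b = n • a + ((n * arcLen a b : ℝ) : UnitAddCircle) := by
    rw [← nsmul_eq_mul, AddCircle.coe_nsmul, coe_arcLen, smul_sub, add_sub_cancel]
  rw [h, arcLen_add_coe]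

lemma arcLen_nsmul_of_lt_of_lt {n k : ℕ} {a b : UnitAddCircle} (hn : 0 < n)
    (hk : (k : ℝ) / n < arcLen a b) (hk' : arcLen a b < (k + 1) / n) :
    arcLen (n • a) (n • b) = n * arcLen a b - k := by
  have hn' : (0 : ℝ) < n := Nat.cast_pos.mpr hn
  rw [div_lt_iff₀' hn'] at hk
  rw [lt_div_iff₀' hn'] at hk'
  rw [arcLen_nsmul, Int.fract_eq_iff]
  exact ⟨by linarith, by linarith, k, by push_cast; ring⟩

def PreservesPosCyclicOn (f : UnitAddCircle → UnitAddCircle) (A : Set UnitAddCircle) : Prop :=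
  ∀ a ∈ A, ∀ b ∈ A, ∀ c ∈ A, a ≠ b → a ≠ c → b ≠ c → PosCyclic a b c →
    PosCyclic (f a) (f b) (f c)

lemma IsComplArc.image {A B : Set UnitAddCircle} {f : UnitAddCircle → UnitAddCircle}
    {a b : UnitAddCircle} (hab : IsComplArc A a b) (hf : Set.BijOn f A B)
    (hcyc : PreservesPosCyclicOn f A) (hne : f a ≠ f b) : IsComplArc B (f a) (f b) := by
  obtain ⟨hab, ha, hb, hempty⟩ := hab
  refine ⟨hne, hf.mapsTo ha, hf.mapsTo hb, Set.eq_empty_of_forall_notMem ?_⟩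
  rintro x ⟨hx, hxB⟩
  obtain ⟨c, hc, rfl⟩ := hf.surjOn hxB
  rw [mem_openArc_iff] at hx
  have hca : c ≠ a := by rintro rfl; simp at hx
  have hcb : c ≠ b := by rintro rfl; exact hx.2.false
  have hc' : c ∉ openArc a b := fun h => (hempty.subset ⟨h, hc⟩ : c ∈ (∅ : Set _))
  exact (hcyc a ha b hb c hc hab hca.symm hcb.symm
    (posCyclic_of_notMem_openArc hca hcb hc')).not_gt hx.2

theorem no_arc_length_in_forbidden_interval_general (dd : ℕ) (N : ℕ)
    (A : ℕ → Set UnitAddCircle) (hA : IsFormalPortrait N (fun _ => dd) A)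
    (ε : ℝ) (hε1 : ε < 1) (m : ℕ)
    (h : ∀ a b : UnitAddCircle, IsComplArc (A (m + 1)) a b → ε ≤ arcLen a b) :
    ∀ a b : UnitAddCircle, IsComplArc (A m) a b →
      ∀ k : ℕ, 1 ≤ k → k ≤ dd - 1 →
        ¬((k : ℝ) / dd < arcLen a b ∧ arcLen a b < ((k : ℝ) + ε) / dd) := by
  rintro a b hab k hk1 hk2 ⟨hlow, hhigh⟩
  obtain ⟨-, -, hbij, hcyc⟩ := hA m
  have hd : 0 < dd := by omega
  have hhigh' : arcLen a b < (k + 1) / dd :=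
    hhigh.trans_le (div_le_div_of_nonneg_right (by linarith) (Nat.cast_nonneg dd))
  have hlen := arcLen_nsmul_of_lt_of_lt hd hlow hhigh'
  rw [div_lt_iff₀' (by positivity)] at hlow
  rw [lt_div_iff₀' (by positivity)] at hhigh
  have hne : dd • a ≠ dd • b := (arcLen_pos_iff _ _).mp (by linarith)
  have := h _ _ (hab.image hbij hcyc hne)
  linarith

/-- Constant degree `d`: if every complementary arc of `A (m+1)` has length at
least `ε`, then no complementary arc of `A m` has length `ℓ` with
`k/d < ℓ < (k + ε)/d` for some integer `1 ≤ k ≤ d − 1`. -/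
theorem no_arc_length_in_forbidden_interval (dd : ℕ) (hdd : 2 ≤ dd) (N : ℕ) (hN : 2 ≤ N)
    (A : ℕ → Set UnitAddCircle) (hA : IsFormalPortrait N (fun _ => dd) A)
    (ε : ℝ) (hε0 : 0 < ε) (hε1 : ε < 1) (m : ℕ)
    (h : ∀ a b : UnitAddCircle, IsComplArc (A (m + 1)) a b → ε ≤ arcLen a b) :
    ∀ a b : UnitAddCircle, IsComplArc (A m) a b →
      ∀ k : ℕ, 1 ≤ k → k ≤ dd - 1 →
        ¬((k : ℝ) / dd < arcLen a b ∧ arcLen a b < ((k : ℝ) + ε) / dd) :=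
  no_arc_length_in_forbidden_interval_general dd N A hA ε hε1 m h
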